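/- arXiv:math/0404452 — 4 statements merged into one kernel-verified Lean document; each statement's English description precedes it below -/
import Mathlib

section
/- Let k be a field, let Γ = {q_1, …, q_s} be a set of s ≥ 4 distinct points of P^3(k), and let q be a point of P^3(k) not in Γ. If the points q, q_1, …, q_s do not all lie on a single hyperplane, then there exists a hyperplane of P^3(k) which contains at least three points of Γ but does not contain q. -/
open Module Submodule

lemma rep_inj' {k : Type*} [Field k] {x y : Projectivization k (Fin 4 → k)}
    (h : x.rep = y.rep) : x = y := by
  rw [← Projectivization.mk_rep x, ← Projectivization.mk_rep y]
  congr 1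

lemma finrank_ker_three {k : Type*} [Field k] (f : (Fin 4 → k) →ₗ[k] k) (hf : f ≠ 0) :
    Module.finrank k (LinearMap.ker f) = 3 := by
  have h1 : Module.finrank k (LinearMap.range f) = 1 := by
    have hne : LinearMap.range f ≠ ⊥ := fun h => hf (LinearMap.range_eq_bot.mp h)
    have h0 : Module.finrank k (LinearMap.range f) ≠ 0 :=
      fun h => hne (Submodule.finrank_eq_zero.mp h)
    have hle : Module.finrank k (LinearMap.range f) ≤ 1 :=
      le_trans (Submodule.finrank_le _) (le_of_eq (Module.finrank_self k))
    omega
  have h2 := LinearMap.finrank_range_add_finrank_ker f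
  rw [h1, Module.finrank_fin_fun] at h2
  omega

/-- Let `Γ` be a set of `s ≥ 4` distinct points of `ℙ³(k)` and let
`q ∉ Γ`. If the points `q` and those of `Γ` do not all lie on one hyperplane (the
projectivization of a 3-dimensional linear subspace of `k⁴`), then there is a
hyperplane containing at least three points of `Γ` but not containing `q`. -/
theorem stmt2 (k : Type*) [Field k]
    (Γ : Finset (Projectivization k (Fin 4 → k))) (hcard : 4 ≤ Γ.card)
    (q : Projectivization k (Fin 4 → k)) (hq : q ∉ Γ)
    (hnotall : ¬ ∃ W : Submodule k (Fin 4 → k), Module.finrank k W = 3 ∧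
      q.rep ∈ W ∧ ∀ x ∈ Γ, x.rep ∈ W) :
    ∃ W : Submodule k (Fin 4 → k), Module.finrank k W = 3 ∧
      3 ≤ ({x : Projectivization k (Fin 4 → k) | x ∈ Γ ∧ x.rep ∈ W}).ncard ∧
      q.rep ∉ W := by
  classical
  set V := Fin 4 → k
  set s : Set V := Projectivization.rep '' (Γ : Set (Projectivization k V)) with hs
  by_cases hspan : span k s = ⊤
  · -- the reps of Γ span V
    obtain ⟨t, hts, hspan', hli⟩ := exists_linearIndependent k s
    rw [hspan] at hspan'
    have htfin : t.Finite := Set.Finite.subset (Γ.finite_toSet.image _) hts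
    haveI : Fintype t := htfin.fintype
    let b : Basis t k V := Basis.mk hli (by rw [Subtype.range_coe, hspan'])
    have hcardt : Fintype.card t = 4 := by
      have := Module.finrank_eq_card_basis b
      rw [Module.finrank_fin_fun] at this
      omega
    -- pick coordinate where q.rep is nonzero
    have hqne : b.repr q.rep ≠ 0 := by
      simp [Projectivization.rep_nonzero q]
    obtain ⟨i₀, hi₀⟩ : ∃ i, b.repr q.rep i ≠ 0 := by
      by_contra h
      push_neg at h
      exact hqne (Finsupp.ext h)
    set W : Submodule k V := span k (b '' {j | j ≠ i₀}) with hW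
    have hqW : q.rep ∉ W := by
      intro hmem
      rw [hW, Basis.mem_span_image] at hmem
      exact (hmem (Finsupp.mem_support_iff.mpr hi₀)) rfl
    have hWrank : Module.finrank k W = 3 := by
      have himg : (b '' {j | j ≠ i₀}) = Set.range (fun j : {j : t // j ≠ i₀} => b j.1) := by
        ext x
        constructor
        · rintro ⟨j, hj, rfl⟩; exact ⟨⟨j, hj⟩, rfl⟩
        · rintro ⟨j, rfl⟩; exact ⟨j.1, j.2, rfl⟩
      have h := finrank_span_eq_card
        (b.linearIndependent.comp (Subtype.val : {j : t // j ≠ i₀} → t)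
          Subtype.val_injective)
      rw [Fintype.card_subtype_compl, hcardt, Fintype.card_subtype_eq] at h
      rw [hW, himg]
      exact h
    refine ⟨W, hWrank, ?_, hqW⟩
    -- three distinct points
    have hcard3 : Fintype.card {j : t // j ≠ i₀} = 3 := by
      rw [Fintype.card_subtype_compl, hcardt, Fintype.card_subtype_eq]
    obtain ⟨j₁, j₂, j₃, h12, h13, h23, huniv⟩ :=
      Finset.card_eq_three.mp (by rw [← Fintype.card, hcard3] :
        (Finset.univ : Finset {j : t // j ≠ i₀}).card = 3)
    have key : ∀ j : {j : t // j ≠ i₀}, ∃ p : Projectivization k V,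
        p ∈ Γ ∧ p.rep ∈ W ∧ p.rep = (j.1 : V) := by
      intro j
      obtain ⟨p, hpΓ, hp⟩ := hts j.1.2
      refine ⟨p, hpΓ, ?_, hp⟩
      rw [hp]
      have : (j.1 : V) = b j.1 := by simp [b]
      rw [this]
      exact subset_span ⟨j.1, j.2, rfl⟩
    obtain ⟨p₁, hp₁Γ, hp₁W, hp₁⟩ := key j₁
    obtain ⟨p₂, hp₂Γ, hp₂W, hp₂⟩ := key j₂
    obtain ⟨p₃, hp₃Γ, hp₃W, hp₃⟩ := key j₃
    have hne : ∀ (a b' : {j : t // j ≠ i₀}) (pa pb : Projectivization k V),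
        a ≠ b' → pa.rep = (a.1 : V) → pb.rep = (b'.1 : V) → pa ≠ pb := by
      intro a b' pa pb hab ha hb hpapb
      apply hab
      apply Subtype.ext; apply Subtype.ext
      rw [← ha, ← hb, hpapb]
    have hsub : {p₁, p₂, p₃} ⊆ {x : Projectivization k V | x ∈ Γ ∧ x.rep ∈ W} := by
      intro x hx
      rcases hx with h | h | h <;> subst h <;> exact ⟨by assumption, by assumption⟩
    calc (3 : ℕ) = ({p₁, p₂, p₃} : Set (Projectivization k V)).ncard := by
          rw [Set.ncard_eq_three.mpr ⟨p₁, p₂, p₃,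
            hne j₁ j₂ p₁ p₂ h12 hp₁ hp₂,
            hne j₁ j₃ p₁ p₃ h13 hp₁ hp₃,
            hne j₂ j₃ p₂ p₃ h23 hp₂ hp₃, rfl⟩]
      _ ≤ _ := Set.ncard_le_ncard hsub (Set.Finite.subset Γ.finite_toSet
            (fun x hx => hx.1))
  · -- reps of Γ do not span
    obtain ⟨f, hf, hker⟩ := exists_dual_map_eq_bot_of_lt_top
      (lt_top_iff_ne_top.mpr hspan) inferInstance
    have hle : span k s ≤ LinearMap.ker f := by
      intro x hx
      have : f x ∈ Submodule.map f (span k s) := ⟨x, hx, rfl⟩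
      rw [hker] at this
      exact LinearMap.mem_ker.mpr ((Submodule.mem_bot k).mp this)
    have hΓker : ∀ x ∈ Γ, x.rep ∈ LinearMap.ker f := fun x hx =>
      hle (subset_span ⟨x, hx, rfl⟩)
    have hrank := finrank_ker_three f hf
    by_cases hqk : q.rep ∈ LinearMap.ker f
    · exact absurd ⟨LinearMap.ker f, hrank, hqk, hΓker⟩ hnotall
    · refine ⟨LinearMap.ker f, hrank, ?_, hqk⟩
      have : {x : Projectivization k V | x ∈ Γ ∧ x.rep ∈ LinearMap.ker f} = ↑Γ := by
        ext x; simp only [Set.mem_setOf_eq, Finset.mem_coe]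
        exact ⟨fun h => h.1, fun h => ⟨h, hΓker x h⟩⟩
      rw [this, Set.ncard_coe_finset]
      omega
end

section
/- Let F be a homogeneous sextic form in 4 complex variables such that the surface S = Z(F) ⊂ P^3 has only finitely many singular points. Let k ≥ 1 and let φ : P^1 → P^3 be the morphism determined by four binary forms of degree k in two variables having no common zero in P^1, and assume φ is nonconstant. Then there are at most 5k points t ∈ P^1 for which φ(t) is a singular point of S. In particular, no 5k+1 singular points of the sextic S lie on a rational curve of degree k: at most 5 singular points of S lie on any line, and at most 10 lie on any conic. -/
open MvPolynomial

private lemma sum_support_eq {σ : Type*} [Fintype σ] (m : σ →₀ ℕ) :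
    ∑ i ∈ m.support, m i = ∑ i : σ, m i :=
  Finset.sum_subset (Finset.subset_univ _) (fun i _ hi => Finsupp.notMem_support_iff.mp hi)

private lemma homog_sum_eq {σ : Type*} [Fintype σ] {G : MvPolynomial σ ℂ} {d : ℕ}
    (hG : G.IsHomogeneous d) {m : σ →₀ ℕ} (hm : m ∈ G.support) :
    ∑ i : σ, m i = d := by
  have h := hG (mem_support_iff.mp hm)
  rw [show (1 : σ → ℕ) = fun _ => 1 from rfl, ← Finsupp.degree_eq_weight_one] at h
  rw [← sum_support_eq]
  exact h

private lemma eval_smul_homog {σ : Type*} [Fintype σ] {G : MvPolynomial σ ℂ} {d : ℕ}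
    (hG : G.IsHomogeneous d) (c : ℂ) (v : σ → ℂ) :
    eval (c • v) G = c ^ d * eval v G := by
  rw [eval_eq', eval_eq', Finset.mul_sum]
  refine Finset.sum_congr rfl fun m hm => ?_
  have hdeg := homog_sum_eq hG hm
  calc G.coeff m * ∏ i : σ, (c • v) i ^ m i
      = G.coeff m * ((∏ i : σ, c ^ m i) * ∏ i : σ, v i ^ m i) := by
        simp [Pi.smul_apply, smul_eq_mul, mul_pow, Finset.prod_mul_distrib]
    _ = c ^ d * (G.coeff m * ∏ i : σ, v i ^ m i) := by
        rw [Finset.prod_pow_eq_pow_sum, hdeg]; ring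

private lemma pderiv_homog {σ : Type*} [Fintype σ] [DecidableEq σ] {F : MvPolynomial σ ℂ} {n : ℕ}
    (hF : F.IsHomogeneous n) (j : σ) : (pderiv j F).IsHomogeneous (n - 1) := by
  conv_lhs => rw [← F.support_sum_monomial_coeff]
  rw [map_sum]
  refine IsHomogeneous.sum _ _ _ fun m hm => ?_
  rw [pderiv_monomial]
  by_cases h : m j = 0
  · simp only [h, Nat.cast_zero, mul_zero, map_zero]
    exact (homogeneousSubmodule σ ℂ (n-1)).zero_mem
  · refine isHomogeneous_monomial _ ?_
    have hd : m.degree = n := by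
      rw [Finsupp.degree_eq_weight_one]
      exact hF (mem_support_iff.mp hm)
    have e1 : ∑ i : σ, m i = m j + ∑ i ∈ Finset.univ.erase j, m i :=
      (Finset.add_sum_erase _ _ (Finset.mem_univ j)).symm
    have e2 : ∑ i : σ, (m - Finsupp.single j 1 : σ →₀ ℕ) i
        = (m j - 1) + ∑ i ∈ Finset.univ.erase j, m i := by
      rw [← Finset.add_sum_erase _ _ (Finset.mem_univ j)]
      congr 1
      · simp [Finsupp.tsub_apply, Finsupp.single_apply]
      · refine Finset.sum_congr rfl fun i hi => ?_
        have hij : j ≠ i := (Finset.ne_of_mem_erase hi).symm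
        simp [Finsupp.tsub_apply, Finsupp.single_apply, hij]
    have hn : ∑ i : σ, m i = n := by rw [← sum_support_eq]; exact hd ▸ rfl
    rw [Finsupp.degree_apply, sum_support_eq]
    omega

private lemma binary_bound {G : MvPolynomial (Fin 2) ℂ} {d : ℕ} (hd : 1 ≤ d)
    (hG : G.IsHomogeneous d) (hG0 : G ≠ 0) :
    {t : Projectivization ℂ (Fin 2 → ℂ) | eval t.rep G = 0}.Finite ∧
    {t : Projectivization ℂ (Fin 2 → ℂ) | eval t.rep G = 0}.ncard ≤ d := by
  classical
  set Z := {t : Projectivization ℂ (Fin 2 → ℂ) | eval t.rep G = 0} with hZ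
  set g : Polynomial ℂ := ∑ m ∈ G.support, Polynomial.C (G.coeff m) * Polynomial.X ^ (m 0)
    with hg
  have hdm : ∀ m ∈ G.support, m 0 + m 1 = d := by
    intro m hm
    have := homog_sum_eq hG hm
    rwa [Fin.sum_univ_two] at this
  have hgeval : ∀ x : ℂ, g.eval x = eval ![x, 1] G := by
    intro x
    rw [eval_eq', hg, Polynomial.eval_finset_sum]
    refine Finset.sum_congr rfl fun m hm => ?_
    rw [Fin.prod_univ_two]
    simp
  have hcoeff : g.coeff d = eval ![1, 0] G := by
    rw [eval_eq', hg, Polynomial.finset_sum_coeff]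
    refine Finset.sum_congr rfl fun m hm => ?_
    rw [Polynomial.coeff_C_mul, Polynomial.coeff_X_pow, Fin.prod_univ_two]
    have h01 := hdm m hm
    simp only [Matrix.cons_val_zero, Matrix.cons_val_one, Matrix.head_cons, one_pow, one_mul]
    rw [zero_pow_eq]
    exact congrArg (G.coeff m * ·) (if_congr (by omega) rfl rfl)
  have hgdeg : g.natDegree ≤ d := by
    rw [hg]
    refine Polynomial.natDegree_sum_le_of_forall_le _ _ fun m hm => ?_
    refine le_trans (Polynomial.natDegree_C_mul_le _ _) ?_
    rw [Polynomial.natDegree_X_pow]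
    have := hdm m hm; omega
  have hg0 : g ≠ 0 := by
    intro h0
    apply hG0
    apply MvPolynomial.funext (q := 0)
    intro v
    rw [map_zero]
    by_cases hv1 : v 1 = 0
    · have hveq : v = (v 0) • ![1, 0] := by
        funext i; fin_cases i <;> simp [hv1]
      rw [hveq, eval_smul_homog hG, ← hcoeff, h0, Polynomial.coeff_zero, mul_zero]
    · have hveq : v = (v 1) • ![v 0 / v 1, 1] := by
        funext i; fin_cases i <;> simp [hv1] <;> field_simp
      rw [hveq, eval_smul_homog hG, ← hgeval, h0, Polynomial.eval_zero, mul_zero]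
  set R : Set ℂ := {x | g.IsRoot x} with hR
  have hRfin : R.Finite := Polynomial.finite_setOf_isRoot hg0
  have hRcard : R.ncard ≤ g.natDegree := by
    have hRe : R = ↑g.roots.toFinset := by
      ext x
      simp [hR, Polynomial.mem_roots', hg0]
    rw [hRe, Set.ncard_coe_finset]
    exact le_trans (Multiset.toFinset_card_le _) g.card_roots'
  have h10 : (![1, 0] : Fin 2 → ℂ) ≠ 0 := by
    intro h; exact (one_ne_zero : (1:ℂ) ≠ 0) (by simpa using congrFun h 0)
  set pt : ℂ → Projectivization ℂ (Fin 2 → ℂ) := fun x =>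
    Projectivization.mk ℂ ![x, 1] (fun h => (one_ne_zero : (1:ℂ) ≠ 0) (by simpa using congrFun h 1)) with hpt
  have hmem : ∀ t : Projectivization ℂ (Fin 2 → ℂ), t ∈ Z → t.rep 1 ≠ 0 → t ∈ pt '' R := by
    intro t ht htr
    have ht' : eval t.rep G = 0 := ht
    refine ⟨t.rep 0 / t.rep 1, ?_, ?_⟩
    · rw [hR, Set.mem_setOf_eq, Polynomial.IsRoot, hgeval]
      have hveq : (![t.rep 0 / t.rep 1, 1] : Fin 2 → ℂ) = (t.rep 1)⁻¹ • t.rep := by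
        funext i; fin_cases i
        · simp [div_eq_inv_mul]
        · simp [inv_mul_cancel₀ htr]
      rw [hveq, eval_smul_homog hG, ht', mul_zero]
    · rw [hpt]
      conv_rhs => rw [← Projectivization.mk_rep t]
      rw [Projectivization.mk_eq_mk_iff']
      refine ⟨(t.rep 1)⁻¹, ?_⟩
      funext i; fin_cases i
      · simp [div_eq_inv_mul]
      · simp [inv_mul_cancel₀ htr]
  by_cases hc : g.coeff d = 0
  · have hdeg1 : g.natDegree ≤ d - 1 := by
      have hne : g.natDegree ≠ d := fun he => (Polynomial.leadingCoeff_ne_zero.mpr hg0)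
        (by rw [Polynomial.leadingCoeff, he]; exact hc)
      omega
    have hsub : Z ⊆ pt '' R ∪ {Projectivization.mk ℂ ![1, 0] h10} := by
      intro t ht
      by_cases htr : t.rep 1 = 0
      · right
        have h0 : t.rep 0 ≠ 0 := by
          intro h
          exact t.rep_nonzero (by funext i; fin_cases i <;> simp [h, htr])
        simp only [Set.mem_singleton_iff]
        conv_lhs => rw [← Projectivization.mk_rep t]
        rw [Projectivization.mk_eq_mk_iff']
        refine ⟨t.rep 0, ?_⟩
        funext i; fin_cases i <;> simp [htr]
      · left; exact hmem t ht htr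
    have hbig : (pt '' R ∪ {Projectivization.mk ℂ ![1, 0] h10}).Finite :=
      (hRfin.image pt).union (Set.finite_singleton _)
    refine ⟨hbig.subset hsub, ?_⟩
    calc Z.ncard ≤ (pt '' R ∪ {Projectivization.mk ℂ ![1, 0] h10}).ncard :=
          Set.ncard_le_ncard hsub hbig
      _ ≤ (pt '' R).ncard + ({Projectivization.mk ℂ ![1, 0] h10} : Set _).ncard :=
          Set.ncard_union_le _ _
      _ ≤ R.ncard + 1 := by
          rw [Set.ncard_singleton]
          exact Nat.add_le_add_right (Set.ncard_image_le hRfin) 1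
      _ ≤ d := by
          have := le_trans hRcard hdeg1; omega
  · have hsub : Z ⊆ pt '' R := by
      intro t ht
      have ht' : eval t.rep G = 0 := ht
      by_cases htr : t.rep 1 = 0
      · exfalso
        have h0 : t.rep 0 ≠ 0 := by
          intro h
          exact t.rep_nonzero (by funext i; fin_cases i <;> simp [h, htr])
        have hveq : t.rep = (t.rep 0) • ![1, 0] := by
          funext i; fin_cases i <;> simp [htr]
        rw [hveq, eval_smul_homog hG, ← hcoeff] at ht'
        exact hc (by
          rcases mul_eq_zero.mp ht' with h | h
          · exact absurd h (pow_ne_zero _ h0)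
          · exact h)
      · exact hmem t ht htr
    refine ⟨(hRfin.image pt).subset hsub, ?_⟩
    calc Z.ncard ≤ (pt '' R).ncard := Set.ncard_le_ncard hsub (hRfin.image pt)
      _ ≤ R.ncard := Set.ncard_image_le hRfin
      _ ≤ d := le_trans hRcard hgdeg

/-- Let `S = Z(F) ⊂ ℙ³` be a sextic surface with only finitely many
singular points, let `k ≥ 1`, and let `φ : ℙ¹ → ℙ³` be a nonconstant morphism given by
four binary forms of degree `k` with no common zero on `ℙ¹`. Then at most `5k` points
`t ∈ ℙ¹` have `φ(t)` a singular point of `S`. -/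
theorem stmt3 (F : MvPolynomial (Fin 4) ℂ) (hF : F.IsHomogeneous 6)
    (hfin : {p : Projectivization ℂ (Fin 4 → ℂ) |
        ∀ j : Fin 4, eval p.rep (pderiv j F) = 0}.Finite)
    (k : ℕ) (hk : 1 ≤ k)
    (φ : Fin 4 → MvPolynomial (Fin 2) ℂ) (hφh : ∀ i, (φ i).IsHomogeneous k)
    (hnocommon : ∀ v : Fin 2 → ℂ, v ≠ 0 → ∃ i, eval v (φ i) ≠ 0)
    (hnonconst : ∃ u v : Fin 2 → ℂ, u ≠ 0 ∧ v ≠ 0 ∧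
      ¬ ∃ c : ℂ, (fun i => eval v (φ i)) = c • fun i => eval u (φ i)) :
    {t : Projectivization ℂ (Fin 2 → ℂ) |
        ∀ j : Fin 4, eval (fun i => eval t.rep (φ i)) (pderiv j F) = 0}.Finite ∧
    {t : Projectivization ℂ (Fin 2 → ℂ) |
        ∀ j : Fin 4, eval (fun i => eval t.rep (φ i)) (pderiv j F) = 0}.ncard ≤ 5 * k := by
  classical
  obtain ⟨u, v, hu, hv, hnc⟩ := hnonconst
  have hPdh : ∀ j : Fin 4, (pderiv j F).IsHomogeneous 5 := fun j => by
    simpa using pderiv_homog hF j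
  set G : Fin 4 → MvPolynomial (Fin 2) ℂ := fun j => MvPolynomial.aeval φ (pderiv j F)
    with hGdef
  have hGeval : ∀ (w : Fin 2 → ℂ) (j : Fin 4),
      eval w (G j) = eval (fun i => eval w (φ i)) (pderiv j F) := fun w j =>
    comp_aeval_apply (f := φ) (aeval w : MvPolynomial (Fin 2) ℂ →ₐ[ℂ] ℂ) (pderiv j F)
  have hGh : ∀ j, (G j).IsHomogeneous (5 * k) := by
    intro j
    have := (hPdh j).aeval φ hφh
    simpa [mul_comm, hGdef] using this
  by_cases hGz : ∃ j, G j ≠ 0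
  · obtain ⟨j, hj⟩ := hGz
    have hsub : {t : Projectivization ℂ (Fin 2 → ℂ) |
          ∀ j : Fin 4, eval (fun i => eval t.rep (φ i)) (pderiv j F) = 0} ⊆
        {t : Projectivization ℂ (Fin 2 → ℂ) | eval t.rep (G j) = 0} := by
      intro t ht
      simp only [Set.mem_setOf_eq] at ht ⊢
      rw [hGeval]
      exact ht j
    obtain ⟨hfin', hcard⟩ := binary_bound (by omega : 1 ≤ 5 * k) (hGh j) hj
    exact ⟨hfin'.subset hsub, le_trans (Set.ncard_le_ncard hsub hfin') hcard⟩
  · exfalso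
    push_neg at hGz
    have hall : ∀ (w : Fin 2 → ℂ) (j : Fin 4),
        eval (fun i => eval w (φ i)) (pderiv j F) = 0 := by
      intro w j
      rw [← hGeval, hGz j, map_zero]
    have hψne : ∀ t : Projectivization ℂ (Fin 2 → ℂ), (fun i => eval t.rep (φ i)) ≠ 0 := by
      intro t h
      obtain ⟨i, hi⟩ := hnocommon t.rep t.rep_nonzero
      exact hi (congrFun h i)
    set ψ : Projectivization ℂ (Fin 2 → ℂ) → Projectivization ℂ (Fin 4 → ℂ) := fun t =>
      Projectivization.mk ℂ _ (hψne t) with hψ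
    have hψmem : ∀ t, ψ t ∈ {p : Projectivization ℂ (Fin 4 → ℂ) |
        ∀ j : Fin 4, eval p.rep (pderiv j F) = 0} := by
      intro t
      intro j
      obtain ⟨a, ha⟩ := Projectivization.exists_smul_eq_mk_rep ℂ _ (hψne t)
      show eval (ψ t).rep (pderiv j F) = 0
      rw [hψ, ← ha, Units.smul_def, eval_smul_homog (hPdh j), hall, mul_zero]
    have hfib : ∀ p, {t | ψ t = p}.Finite := by
      intro p
      rcases Set.eq_empty_or_nonempty {t | ψ t = p} with he | ⟨t0, ht0⟩
      · rw [he]; exact Set.finite_empty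
      · set w : Fin 4 → ℂ := fun i => eval t0.rep (φ i) with hw
        have hminor : ∃ a b : Fin 4, (C (w a)) * φ b - (C (w b)) * φ a ≠ 0 := by
          by_contra hmz
          push_neg at hmz
          have heval : ∀ (x : Fin 2 → ℂ) (a b : Fin 4),
              w a * eval x (φ b) = w b * eval x (φ a) := by
            intro x a b
            have h := congrArg (eval x) (sub_eq_zero.mp (hmz a b))
            simpa using h
          obtain ⟨i0, hwi0⟩ := hnocommon t0.rep t0.rep_nonzero
          have hui0 : eval u (φ i0) ≠ 0 := by
            obtain ⟨l, hl⟩ := hnocommon u hu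
            intro h0
            apply hl
            have h := heval u i0 l
            rw [h0, mul_zero] at h
            exact (mul_eq_zero.mp h).resolve_left hwi0
          apply hnc
          refine ⟨eval v (φ i0) / eval u (φ i0), ?_⟩
          funext b
          have h1 := heval v i0 b
          have h2 := heval u i0 b
          have key : eval v (φ b) * eval u (φ i0) = eval v (φ i0) * eval u (φ b) := by
            refine mul_left_cancel₀ hwi0 ?_
            linear_combination (eval u (φ i0)) * h1 - (eval v (φ i0)) * h2
          simp only [Pi.smul_apply, smul_eq_mul]
          rw [div_mul_eq_mul_div, eq_div_iff hui0]
          linear_combination key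
        obtain ⟨a, b, hab⟩ := hminor
        have hM : ((C (w a)) * φ b - (C (w b)) * φ a).IsHomogeneous k := by
          have h1 : (C (w a) * φ b).IsHomogeneous k := by
            simpa using (isHomogeneous_C _ (w a)).mul (hφh b)
          have h2 : (C (w b) * φ a).IsHomogeneous k := by
            simpa using (isHomogeneous_C _ (w b)).mul (hφh a)
          exact h1.sub h2
        have hsub2 : {t | ψ t = p} ⊆
            {t : Projectivization ℂ (Fin 2 → ℂ) |
              eval t.rep (C (w a) * φ b - C (w b) * φ a) = 0} := by
          intro t ht
          have hpp : ψ t = ψ t0 := by rw [ht]; exact ht0.symm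
          rw [hψ, Projectivization.mk_eq_mk_iff'] at hpp
          obtain ⟨c, hc⟩ := hpp
          simp only [Set.mem_setOf_eq, map_sub, map_mul, eval_C]
          have hcb := congrFun hc b
          have hca := congrFun hc a
          simp only [Pi.smul_apply, smul_eq_mul] at hcb hca
          rw [← hcb, ← hca]
          ring
        exact ((binary_bound hk hM hab).1).subset hsub2
    have hcover : (Set.univ : Set (Projectivization ℂ (Fin 2 → ℂ))) ⊆
        ⋃ p ∈ {p : Projectivization ℂ (Fin 4 → ℂ) |
            ∀ j : Fin 4, eval p.rep (pderiv j F) = 0}, {t | ψ t = p} := by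
      intro t _
      exact Set.mem_biUnion (hψmem t) rfl
    have huniv : (Set.univ : Set (Projectivization ℂ (Fin 2 → ℂ))).Finite :=
      (hfin.biUnion (fun p _ => hfib p)).subset hcover
    have hinj : Function.Injective (fun x : ℂ =>
        Projectivization.mk ℂ ![x, 1]
          (fun h => (one_ne_zero : (1:ℂ) ≠ 0) (by simpa using congrFun h 1))) := by
      intro x y hxy
      rw [Projectivization.mk_eq_mk_iff'] at hxy
      obtain ⟨a, ha⟩ := hxy
      have h1 := congrFun ha 1
      have h0 := congrFun ha 0
      simp only [Pi.smul_apply, smul_eq_mul, Matrix.cons_val_one, Matrix.head_cons,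
        Matrix.cons_val_zero, mul_one] at h1 h0
      rw [h1, one_mul] at h0
      exact h0.symm
    exact (Set.infinite_of_injective_forall_mem hinj (fun a => Set.mem_univ _)) huniv
end

section
/- Let F be a homogeneous sextic form in 4 complex variables such that the surface S = Z(F) ⊂ P^3 has only finitely many singular points, and let L ⊂ S be a line containing 5 distinct singular points of S. Then the gradient ∇F, evaluated at representatives of the points of L, takes values in one fixed 1-dimensional linear subspace of ℂ^4; consequently there is a single hyperplane H ⊂ P^3 containing L such that at every smooth point p of S lying on L the tangent hyperplane of S at p equals H (all hyperplanes tangent to S at points of L coincide). -/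
open MvPolynomial

/-- A point of `ℙ³(ℂ)` (projectivization of `ℂ⁴`). -/
abbrev ProjP3 := Projectivization ℂ (Fin 4 → ℂ)

/-- `p` is a singular point of the surface `Z(F) ⊂ ℙ³`: all four partial
derivatives of `F` vanish at a representative of `p`. -/
def IsSingularPt (F : MvPolynomial (Fin 4) ℂ) (p : ProjP3) : Prop :=
  ∀ i : Fin 4, eval p.rep (pderiv i F) = 0

namespace Stmt7Aux

set_option linter.unusedSectionVars false

variable {σ : Type*} [Fintype σ] [DecidableEq σ]

lemma degree_eq_sum_univ (d : σ →₀ ℕ) : Finsupp.degree d = ∑ i, d i :=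
  Finset.sum_subset (Finset.subset_univ _) (fun i _ hi => by
    simpa using Finsupp.notMem_support_iff.mp hi)

lemma degree_of_mem_support {φ : MvPolynomial σ ℂ} {n : ℕ} (hφ : φ.IsHomogeneous n)
    {d : σ →₀ ℕ} (hd : d ∈ φ.support) : Finsupp.degree d = n := by
  rw [Finsupp.degree_eq_weight_one]
  exact hφ (mem_support_iff.mp hd)

lemma eval_smul_of_isHomogeneous {φ : MvPolynomial σ ℂ} {n : ℕ}
    (hφ : φ.IsHomogeneous n) (c : ℂ) (v : σ → ℂ) :
    eval (c • v) φ = c ^ n * eval v φ := by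
  rw [eval_eq', eval_eq', Finset.mul_sum]
  refine Finset.sum_congr rfl fun d hd => ?_
  have hsum : ∑ i, d i = n := by rw [← degree_eq_sum_univ]; exact degree_of_mem_support hφ hd
  calc coeff d φ * ∏ i, (c • v) i ^ d i
      = coeff d φ * ((∏ i, c ^ d i) * ∏ i, v i ^ d i) := by
        rw [← Finset.prod_mul_distrib]
        simp [mul_pow]
    _ = c ^ n * (coeff d φ * ∏ i, v i ^ d i) := by
        rw [Finset.prod_pow_eq_pow_sum, hsum]; ring

lemma isHomogeneous_pderiv {φ : MvPolynomial σ ℂ} {n : ℕ}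
    (hφ : φ.IsHomogeneous (n + 1)) (i : σ) : (pderiv i φ).IsHomogeneous n := by
  conv_lhs => rw [φ.as_sum]
  rw [map_sum]
  apply IsHomogeneous.sum
  intro d hd
  rw [pderiv_monomial]
  by_cases h : d i = 0
  · rw [h]
    simpa using isHomogeneous_zero σ ℂ n
  · apply isHomogeneous_monomial
    have hdeg : Finsupp.degree d = n + 1 := degree_of_mem_support hφ hd
    rw [degree_eq_sum_univ] at hdeg ⊢
    have hrec : ∀ j : σ, (d - Finsupp.single i 1 : σ →₀ ℕ) j
        = d j - (Finsupp.single i 1 : σ →₀ ℕ) j := fun j => Finsupp.tsub_apply _ _ _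
    rw [Finset.sum_eq_add_sum_sdiff_singleton_of_mem (Finset.mem_univ i)]
    rw [Finset.sum_eq_add_sum_sdiff_singleton_of_mem (Finset.mem_univ i)] at hdeg
    have hcongr : ∑ j ∈ Finset.univ \ {i}, (d - Finsupp.single i 1 : σ →₀ ℕ) j
        = ∑ j ∈ Finset.univ \ {i}, d j := by
      refine Finset.sum_congr rfl fun j hj => ?_
      have hji : j ≠ i := by simpa using (Finset.mem_sdiff.mp hj).2
      rw [hrec j, Finsupp.single_apply, if_neg (Ne.symm hji)]
      simp
    rw [hcongr, hrec i, Finsupp.single_apply, if_pos rfl]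
    omega

lemma euler {φ : MvPolynomial σ ℂ} {n : ℕ} (hφ : φ.IsHomogeneous n) :
    ∑ i, (X i : MvPolynomial σ ℂ) * pderiv i φ = C (n : ℂ) * φ := by
  conv_lhs => rw [φ.as_sum]
  conv_rhs => rw [φ.as_sum]
  rw [Finset.mul_sum]
  simp_rw [map_sum, Finset.mul_sum]
  rw [Finset.sum_comm]
  refine Finset.sum_congr rfl fun d hd => ?_
  have hsum : ∑ i, d i = n := by rw [← degree_eq_sum_univ]; exact degree_of_mem_support hφ hd
  have step : ∀ i : σ, (X i : MvPolynomial σ ℂ) * pderiv i (monomial d (coeff d φ))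
      = monomial d (coeff d φ * d i) := by
    intro i
    rw [pderiv_monomial]
    by_cases h : d i = 0
    · simp [h]
    · have key : Finsupp.single i 1 + (d - Finsupp.single i 1) = d := by
        ext j
        by_cases hj : j = i
        · subst hj
          simp only [Finsupp.add_apply, Finsupp.tsub_apply, Finsupp.single_apply, if_pos rfl,
            if_true]
          omega
        · simp [Finsupp.add_apply, Finsupp.tsub_apply, Finsupp.single_apply, Ne.symm hj]
      rw [← pow_one (X i : MvPolynomial σ ℂ), ← monomial_single_add, key]
  rw [Finset.sum_congr rfl fun i _ => step i]
  rw [C_mul_monomial, ← map_sum (monomial d) (fun i => coeff d φ * (d i : ℂ)) Finset.univ,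
    ← Finset.mul_sum]
  congr 1
  rw [← Nat.cast_sum, hsum, mul_comm]


set_option linter.unusedSectionVars false

variable {σ : Type*} [Fintype σ] [DecidableEq σ]

lemma coeff_prod_of_natDegree_le' {ι : Type*} (s : Finset ι) (f : ι → Polynomial ℂ) (d : ι → ℕ)
    (h : ∀ i ∈ s, (f i).natDegree ≤ d i) :
    (∏ i ∈ s, f i).coeff (∑ i ∈ s, d i) = ∏ i ∈ s, (f i).coeff (d i) := by
  induction s using Finset.cons_induction with
  | empty => simp
  | cons a s ha ih =>
    rw [Finset.prod_cons, Finset.sum_cons, Finset.prod_cons,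
      Polynomial.coeff_mul_add_eq_of_natDegree_le (h a (Finset.mem_cons_self a s))
        (le_trans (Polynomial.natDegree_prod_le _ _)
          (Finset.sum_le_sum fun i hi => h i (Finset.mem_cons_of_mem hi))),
      ih fun i hi => h i (Finset.mem_cons_of_mem hi)]

/-- Restriction of a polynomial to the parametrized line `t ↦ v + t • u`. -/
noncomputable def lineSubst (u v : σ → ℂ) (φ : MvPolynomial σ ℂ) : Polynomial ℂ :=
  MvPolynomial.aeval (fun i => Polynomial.C (v i) + Polynomial.C (u i) * Polynomial.X) φ

lemma lineSubst_eval (u v : σ → ℂ) (φ : MvPolynomial σ ℂ) (t : ℂ) :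
    (lineSubst u v φ).eval t = eval (v + t • u) φ := by
  induction φ using MvPolynomial.induction_on with
  | C a => simp [lineSubst]
  | add p q hp hq =>
    rw [lineSubst] at hp hq ⊢
    rw [map_add, Polynomial.eval_add, hp, hq, map_add]
  | mul_X p i hp =>
    rw [lineSubst] at hp ⊢
    rw [map_mul, aeval_X, Polynomial.eval_mul, hp, map_mul, eval_X, Polynomial.eval_add,
      Polynomial.eval_mul, Polynomial.eval_C, Polynomial.eval_C, Polynomial.eval_X]
    simp only [Pi.add_apply, Pi.smul_apply, smul_eq_mul]
    ring

lemma natDegree_linear_le {a b : ℂ} :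
    (Polynomial.C a + Polynomial.C b * Polynomial.X).natDegree ≤ 1 := by
  compute_degree

lemma natDegree_pow_linear_le (a b : ℂ) (k : ℕ) :
    ((Polynomial.C a + Polynomial.C b * Polynomial.X) ^ k).natDegree ≤ k := by
  refine le_trans Polynomial.natDegree_pow_le ?_
  calc k * (Polynomial.C a + Polynomial.C b * Polynomial.X).natDegree
      ≤ k * 1 := Nat.mul_le_mul_left _ natDegree_linear_le
    _ = k := mul_one _

lemma lineSubst_natDegree_le {φ : MvPolynomial σ ℂ} {n : ℕ} (hφ : φ.IsHomogeneous n)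
    (u v : σ → ℂ) : (lineSubst u v φ).natDegree ≤ n := by
  rw [lineSubst]
  conv_lhs => rw [φ.as_sum]
  rw [map_sum]
  apply Polynomial.natDegree_sum_le_of_forall_le
  intro d hd
  rw [aeval_monomial]
  refine le_trans Polynomial.natDegree_mul_le ?_
  have h1 : (algebraMap ℂ (Polynomial ℂ) (coeff d φ)).natDegree = 0 := by
    rw [Polynomial.algebraMap_eq]; exact Polynomial.natDegree_C _
  rw [h1, zero_add, Finsupp.prod]
  refine le_trans (Polynomial.natDegree_prod_le _ _) ?_
  refine le_trans (Finset.sum_le_sum fun i _ => natDegree_pow_linear_le (v i) (u i) (d i)) ?_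
  rw [show ∑ i ∈ d.support, d i = Finsupp.degree d from rfl, degree_of_mem_support hφ hd]

lemma lineSubst_coeff_top {φ : MvPolynomial σ ℂ} {n : ℕ} (hφ : φ.IsHomogeneous n)
    (u v : σ → ℂ) : (lineSubst u v φ).coeff n = eval u φ := by
  rw [lineSubst]
  conv_lhs => rw [φ.as_sum]
  conv_rhs => rw [φ.as_sum]
  rw [map_sum, map_sum, Polynomial.finset_sum_coeff]
  refine Finset.sum_congr rfl fun d hd => ?_
  rw [aeval_monomial, eval_monomial, Polynomial.algebraMap_eq, Polynomial.coeff_C_mul]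
  congr 1
  have hn : ∑ i ∈ d.support, d i = n := degree_of_mem_support hφ hd
  rw [Finsupp.prod, Finsupp.prod, ← hn,
    coeff_prod_of_natDegree_le' _ _ _ (fun i _ => natDegree_pow_linear_le (v i) (u i) (d i))]
  refine Finset.prod_congr rfl fun i _ => ?_
  have hc := Polynomial.coeff_pow_of_natDegree_le
    (p := Polynomial.C (v i) + Polynomial.C (u i) * Polynomial.X) (n := 1) (m := d i)
    natDegree_linear_le
  rw [mul_one] at hc
  rw [hc]
  congr 1
  simp [Polynomial.coeff_C]


end Stmt7Aux

open Stmt7Aux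

/-- Let `S = Z(F) ⊂ ℙ³` be a sextic surface with only finitely many
singular points and let `L ⊂ S` be a line (projectivization of the 2-dimensional
subspace `W`) containing 5 distinct singular points of `S`. Then the gradient `∇F`,
evaluated at the vectors of `W`, takes values in one fixed 1-dimensional linear subspace
`ℂ·w` of `ℂ⁴`; consequently the single hyperplane `H = ℙ(ker w) ⊂ ℙ³` contains `L`
(so that at every smooth point of `S` on `L` the tangent hyperplane of `S` equals `H`). -/


theorem stmt7 (F : MvPolynomial (Fin 4) ℂ) (hF : F.IsHomogeneous 6)
    (hfin : {p : ProjP3 | IsSingularPt F p}.Finite)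
    (W : Submodule ℂ (Fin 4 → ℂ)) (hW : Module.finrank ℂ W = 2)
    (hLS : ∀ v ∈ W, eval v F = 0)
    (h5 : ∃ T : Finset ProjP3, T.card = 5 ∧
      ∀ p ∈ T, p.rep ∈ W ∧ IsSingularPt F p) :
    ∃ w : Fin 4 → ℂ, w ≠ 0 ∧
      (∀ v ∈ W, ∃ c : ℂ, (fun j : Fin 4 => eval v (pderiv j F)) = c • w) ∧
      (∀ v ∈ W, ∑ j : Fin 4, w j * v j = 0) := by
  classical
  obtain ⟨T, hT5, hT⟩ := h5
  have hF' : F.IsHomogeneous (5 + 1) := by norm_num; exact hF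
  have hGhom : ∀ j : Fin 4, (pderiv j F).IsHomogeneous 5 := fun j => isHomogeneous_pderiv hF' j
  -- basis of W
  let b : Module.Basis (Fin 2) ℂ W := Module.finBasisOfFinrankEq ℂ W hW
  set B0 : Fin 4 → ℂ := ((b 0 : W) : Fin 4 → ℂ) with hB0
  set B1 : Fin 4 → ℂ := ((b 1 : W) : Fin 4 → ℂ) with hB1
  have hB0W : B0 ∈ W := (b 0).2
  have hB1W : B1 ∈ W := (b 1).2
  -- coordinates
  let coord : (Fin 4 → ℂ) → Fin 2 → ℂ := fun v i => if h : v ∈ W then b.repr ⟨v, h⟩ i else 0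
  have hcoords : ∀ v, v ∈ W → v = coord v 0 • B0 + coord v 1 • B1 := by
    intro v hv
    have h1 := b.sum_repr ⟨v, hv⟩
    have h2 := congrArg (Subtype.val : W → (Fin 4 → ℂ)) h1
    rw [Fin.sum_univ_two] at h2
    simp only [coord, dif_pos hv]
    exact h2.symm
  have hindep : ∀ x y : ℂ, x • B0 + y • B1 = 0 → x = 0 ∧ y = 0 := by
    intro x y hxy
    have h0 : x • b 0 + y • b 1 = (0 : W) := by
      apply Subtype.ext
      rw [Submodule.coe_add, SetLike.val_smul, SetLike.val_smul, ZeroMemClass.coe_zero]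
      exact hxy
    have hli := Fintype.linearIndependent_iff.mp b.linearIndependent ![x, y]
      (by
        rw [Fin.sum_univ_two]
        simp only [Matrix.cons_val_zero, Matrix.cons_val_one, Matrix.head_cons]
        exact h0)
    exact ⟨hli 0, hli 1⟩
  -- choice of a generic vector e2 in W
  obtain ⟨s, hs⟩ := Infinite.exists_notMem_finset
    (T.image (fun p : ProjP3 => coord p.rep 1 / coord p.rep 0))
  set e1 : Fin 4 → ℂ := B1 with he1
  set e2 : Fin 4 → ℂ := B0 + s • B1 with he2
  have he1W : e1 ∈ W := hB1W
  have he2W : e2 ∈ W := W.add_mem hB0W (W.smul_mem _ hB1W)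
  -- coordinates with respect to (e1, e2)
  set al : (Fin 4 → ℂ) → ℂ := fun v => coord v 1 - s * coord v 0 with hal'
  set be : (Fin 4 → ℂ) → ℂ := fun v => coord v 0 with hbe'
  have hab0 : ∀ x y : ℂ, x • B0 + y • B1 = (y - s * x) • e1 + x • e2 := by
    intro x y
    rw [he1, he2]
    module
  have hab : ∀ v, v ∈ W → v = al v • e1 + be v • e2 := by
    intro v hv
    conv_lhs => rw [hcoords v hv]
    exact hab0 (coord v 0) (coord v 1)
  have hrepW : ∀ p ∈ T, p.rep ∈ W := fun p hp => (hT p hp).1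
  have hrep0 : ∀ v, v ∈ W → al v = 0 → be v = 0 → v = 0 := by
    intro v hv h1 h2
    rw [hab v hv, h1, h2, zero_smul, zero_smul, add_zero]
  have halT : ∀ p ∈ T, al p.rep ≠ 0 := by
    intro p hp h0
    by_cases hc0 : coord p.rep 0 = 0
    · exact p.rep_nonzero (hrep0 p.rep (hrepW p hp) h0 hc0)
    · apply hs
      refine Finset.mem_image.mpr ⟨p, hp, ?_⟩
      have h0' : coord p.rep 1 - s * coord p.rep 0 = 0 := h0
      have : coord p.rep 1 = s * coord p.rep 0 := by linear_combination h0'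
      rw [this]
      field_simp
  -- chart values
  set tv : ProjP3 → ℂ := fun p => be p.rep / al p.rep with htv
  have hchart : ∀ p ∈ T, e1 + tv p • e2 = (al p.rep)⁻¹ • p.rep := by
    intro p hp
    have hαne : al p.rep ≠ 0 := halT p hp
    have hv := hab p.rep (hrepW p hp)
    rw [htv]
    simp only
    set α := al p.rep with hα
    set β := be p.rep with hβ
    rw [hv]
    conv_rhs => rw [smul_add, smul_smul, smul_smul, inv_mul_cancel₀ hαne, one_smul]
    rw [div_eq_inv_mul]
  -- injectivity of chart values on T
  have htvinj : Set.InjOn tv T := by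
    intro p hp q hq heq
    have h1 := hchart p hp
    have h2 := hchart q hq
    rw [heq] at h1
    have h3 : (al p.rep)⁻¹ • p.rep = (al q.rep)⁻¹ • q.rep := by rw [← h1, ← h2]
    have h4 : (al p.rep * (al q.rep)⁻¹) • q.rep = p.rep := by
      rw [mul_smul, ← h3, smul_smul, mul_inv_cancel₀ (halT p hp), one_smul]
    have h5 : Projectivization.mk ℂ p.rep p.rep_nonzero
        = Projectivization.mk ℂ q.rep q.rep_nonzero :=
      (Projectivization.mk_eq_mk_iff' ℂ _ _ _ _).mpr ⟨_, h4⟩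
    rwa [Projectivization.mk_rep, Projectivization.mk_rep] at h5
  -- the degree-5 polynomial with the five chart values as roots
  set R : Finset ℂ := T.image tv with hR
  have hRcard : R.card = 5 := by rw [hR, Finset.card_image_of_injOn htvinj, hT5]
  set h : Polynomial ℂ := ∏ r ∈ R, (Polynomial.X - Polynomial.C r) with hh
  have hhmonic : h.Monic := Polynomial.monic_prod_of_monic _ _
    (fun r _ => Polynomial.monic_X_sub_C r)
  have hhdeg : h.natDegree = 5 := by
    rw [hh, Polynomial.natDegree_prod_of_monic _ _ (fun r _ => Polynomial.monic_X_sub_C r)]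
    simp [Polynomial.natDegree_X_sub_C, hRcard]
  -- the gradient vector
  set w : Fin 4 → ℂ := fun j => eval e2 (pderiv j F) with hw
  set q : Fin 4 → Polynomial ℂ := fun j => lineSubst e2 e1 (pderiv j F) with hq
  have hqcoeff : ∀ j, (q j).coeff 5 = w j := fun j => lineSubst_coeff_top (hGhom j) e2 e1
  have hqroots : ∀ j, ∀ r ∈ R, (q j).eval r = 0 := by
    intro j r hr
    obtain ⟨p, hp, rfl⟩ := Finset.mem_image.mp hr
    rw [hq]
    simp only
    rw [lineSubst_eval, hchart p hp, eval_smul_of_isHomogeneous (hGhom j),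
      (hT p hp).2 j, mul_zero]
  have hqeq : ∀ j, q j = h * Polynomial.C (w j) := by
    intro j
    have hdvd : h ∣ q j := by
      rw [hh]
      refine Finset.prod_dvd_of_coprime ?_ (fun r _ => ?_)
      · intro x _ y _ hxy
        exact (Polynomial.pairwise_coprime_X_sub_C (Function.injective_id) hxy)
      · exact Polynomial.dvd_iff_isRoot.mpr (hqroots j r ‹r ∈ R›)
    obtain ⟨r, hr⟩ := hdvd
    by_cases hq0 : q j = 0
    · have hw0 : w j = 0 := by rw [← hqcoeff j, hq0, Polynomial.coeff_zero]
      rw [hq0, hw0, map_zero, mul_zero]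
    · have hrne : r ≠ 0 := by
        rintro rfl
        rw [mul_zero] at hr
        exact hq0 hr
      have hdegq : (q j).natDegree ≤ 5 := lineSubst_natDegree_le (hGhom j) e2 e1
      have hdeg2 : (q j).natDegree = 5 + r.natDegree := by
        rw [hr, Polynomial.natDegree_mul hhmonic.ne_zero hrne, hhdeg]
      have hrdeg : r.natDegree = 0 := by omega
      obtain ⟨a, rfl⟩ := Polynomial.natDegree_eq_zero.mp hrdeg
      have ha : a = w j := by
        rw [← hqcoeff j, hr, Polynomial.coeff_mul_C, ← hhdeg, Polynomial.Monic.coeff_natDegree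
          hhmonic, one_mul]
      rw [hr, ha]
  have hqeval : ∀ j (t : ℂ), eval (e1 + t • e2) (pderiv j F) = h.eval t * w j := by
    intro j t
    rw [← lineSubst_eval]
    show (q j).eval t = _
    rw [hqeq j, Polynomial.eval_mul, Polynomial.eval_C]
  -- the key vectors on the line are nonzero
  have key : ∀ t : ℂ, e1 + t • e2 = t • B0 + (1 + t * s) • e1 := by
    intro t
    rw [he1, he2]
    module
  have hne : ∀ t : ℂ, e1 + t • e2 ≠ 0 := by
    intro t h0
    rw [key t] at h0
    obtain ⟨h1, h2⟩ := hindep _ _ h0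
    rw [h1, zero_mul, add_zero] at h2
    exact one_ne_zero h2
  -- w ≠ 0
  have hw0 : w ≠ 0 := by
    intro hwz
    have hsing : ∀ t : ℂ, IsSingularPt F (Projectivization.mk ℂ (e1 + t • e2) (hne t)) := by
      intro t i
      obtain ⟨c, hc⟩ := Projectivization.exists_smul_eq_mk_rep ℂ (e1 + t • e2) (hne t)
      rw [← hc, Units.smul_def, eval_smul_of_isHomogeneous (hGhom i), hqeval i t,
        congrFun hwz i, Pi.zero_apply, mul_zero, mul_zero]
    have hinj2 : Function.Injective (fun t : ℂ => Projectivization.mk ℂ (e1 + t • e2) (hne t)) := by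
      intro t t' heq
      obtain ⟨a, ha⟩ := (Projectivization.mk_eq_mk_iff' ℂ _ _ (hne t) (hne t')).mp heq
      have key2 : (a * t' - t) • B0 + ((a - 1) + (a * t' - t) * s) • e1
          = a • (e1 + t' • e2) - (e1 + t • e2) := by
        rw [he1, he2]
        module
      rw [ha, sub_self] at key2
      obtain ⟨h1, h2⟩ := hindep _ _ key2
      rw [h1, zero_mul, add_zero, sub_eq_zero] at h2
      rw [h2, one_mul] at h1
      exact (sub_eq_zero.mp h1).symm
    have hsub : Set.range (fun t : ℂ => Projectivization.mk ℂ (e1 + t • e2) (hne t))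
        ⊆ {p : ProjP3 | IsSingularPt F p} := by
      rintro x ⟨t, rfl⟩
      exact hsing t
    exact Set.infinite_range_of_injective hinj2 (hfin.subset hsub)
  -- Euler identity consequence
  have heuler : ∀ v, v ∈ W → ∑ j : Fin 4, v j * eval v (pderiv j F) = 0 := by
    intro v hv
    have h6 := congrArg (eval v) (euler hF)
    simp only [map_sum, eval_mul, eval_X, eval_C] at h6
    rw [hLS v hv, mul_zero] at h6
    exact h6
  have hS2 : ∑ j : Fin 4, w j * e2 j = 0 := by
    have h7 := heuler e2 he2W
    rw [← h7]
    refine Finset.sum_congr rfl fun j _ => ?_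
    rw [hw]
    ring
  have hS1 : ∑ j : Fin 4, w j * e1 j = 0 := by
    obtain ⟨t0, ht0⟩ := Infinite.exists_notMem_finset R
    have hh0 : Polynomial.eval t0 h ≠ 0 := by
      rw [hh, Polynomial.eval_prod]
      refine Finset.prod_ne_zero_iff.mpr fun r hr => ?_
      simp only [Polynomial.eval_sub, Polynomial.eval_X, Polynomial.eval_C, sub_ne_zero]
      exact fun hrr => ht0 (hrr ▸ hr)
    have hv0W : e1 + t0 • e2 ∈ W := W.add_mem he1W (W.smul_mem _ he2W)
    have he' : ∑ j : Fin 4, (e1 j + t0 * e2 j) * (Polynomial.eval t0 h * w j) = 0 := by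
      rw [← heuler _ hv0W]
      refine Finset.sum_congr rfl fun j _ => ?_
      rw [← hqeval j t0]
      simp [Pi.add_apply, Pi.smul_apply, smul_eq_mul]
    have hexp : ∀ j : Fin 4, (e1 j + t0 * e2 j) * (Polynomial.eval t0 h * w j)
        = Polynomial.eval t0 h * (w j * e1 j) + Polynomial.eval t0 h * t0 * (w j * e2 j) :=
      fun j => by ring
    rw [Finset.sum_congr rfl fun j _ => hexp j, Finset.sum_add_distrib, ← Finset.mul_sum,
      ← Finset.mul_sum, hS2, mul_zero, add_zero] at he'
    rcases mul_eq_zero.mp he' with h8 | h8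
    · exact absurd h8 hh0
    · exact h8
  refine ⟨w, hw0, ?_, ?_⟩
  · -- gradient proportionality
    intro v hv
    have hv' := hab v hv
    set α := al v with hA
    set β := be v with hB
    by_cases hα : α = 0
    · refine ⟨β ^ 5, ?_⟩
      funext j
      simp only [Pi.smul_apply, smul_eq_mul]
      rw [hv', hα, zero_smul, zero_add, eval_smul_of_isHomogeneous (hGhom j)]
    · refine ⟨α ^ 5 * Polynomial.eval (β / α) h, ?_⟩
      funext j
      simp only [Pi.smul_apply, smul_eq_mul]
      have hv2 : v = α • (e1 + (β / α) • e2) := by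
        rw [smul_add, smul_smul, mul_div_cancel₀ β hα]
        exact hv'
      rw [hv2, eval_smul_of_isHomogeneous (hGhom j), hqeval j]
      ring
  · -- orthogonality
    intro v hv
    have hv' := hab v hv
    set α := al v with hA
    set β := be v with hB
    calc ∑ j : Fin 4, w j * v j
        = ∑ j : Fin 4, (α * (w j * e1 j) + β * (w j * e2 j)) := by
          refine Finset.sum_congr rfl fun j _ => ?_
          rw [hv']
          simp only [Pi.add_apply, Pi.smul_apply, smul_eq_mul]
          ring
      _ = α * (∑ j : Fin 4, w j * e1 j) + β * (∑ j : Fin 4, w j * e2 j) := by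
          rw [Finset.sum_add_distrib, ← Finset.mul_sum, ← Finset.mul_sum]
      _ = 0 := by rw [hS1, hS2, mul_zero, mul_zero, add_zero]
end

section
/- Let k be an algebraically closed field of characteristic 0 or of characteristic greater than 5. Let p and q be linearly independent binary quintic forms over k whose greatest common divisor has degree at most 3. Then for all but finitely many [λ:μ] ∈ P^1(k), the binary quintic form λp + μq has at least two distinct simple zeros in P^1(k), none of which is a common zero of p and q. (This is the key point of the positive-characteristic Bertini-type lemma: a general plane section through a line L contained in a nodal sextic surface with at most 3 nodes on L acquires at least 2 new simple double points on L.) -/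
open MvPolynomial

/-- `t ∈ ℙ¹(k)` is a simple zero (zero of multiplicity one) of the binary form `r`:
the linear form cutting out `t` divides `r`, but its square does not. -/
def IsSimpleZero (k : Type*) [Field k] (r : MvPolynomial (Fin 2) k)
    (t : Projectivization k (Fin 2 → k)) : Prop :=
  (C (t.rep 1) * X 0 - C (t.rep 0) * X 1) ∣ r ∧
    ¬ (C (t.rep 1) * X 0 - C (t.rep 0) * X 1) ^ 2 ∣ r

/-!
Dehomogenize at `x₁ = 1`: `p = g p₁`, `q = g q₁` with `p₁, q₁` coprime. Since `g` homogenized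
to degree `5 - N` divides `p` and `q`, the gcd bound gives `N := max (deg p₁) (deg q₁) ≥ 2`, and
the characteristic bound makes the Wronskian `W = p₁ q₁' - p₁' q₁` nonzero. The member
`K = λ p₁ + μ q₁` of the reduced pencil vanishes at `r` exactly when `(λ, μ)` is orthogonal to
`(p₁ r, q₁ r)`, and a double root of `K` is a zero of `W`. So, excluding one parameter `[λ : μ]`
for each zero of `W g` and the one where `deg K < N`, `K` has `N ≥ 2` simple roots, none a zero
of `g`; they are simple zeros of `λ p + μ q = g K` which are not common zeros of `p` and `q`.
-/

open Polynomial

section Homogenize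

variable {R : Type*} [CommSemiring R]

theorem MvPolynomial.IsHomogeneous.exists_homogenize_eq {f : MvPolynomial (Fin 2) R} {n : ℕ}
    (hf : f.IsHomogeneous n) : ∃ F : R[X], F.natDegree ≤ n ∧ F.homogenize n = f :=
  ⟨MvPolynomial.aeval ![Polynomial.X, 1] f,
    (MvPolynomial.aeval_natDegree_le f hf.totalDegree_le _ fun i => by
      fin_cases i <;> simp [natDegree_X_le]).trans_eq (mul_one n),
    homogenize_eq_of_isHomogeneous hf rfl⟩

variable [NoZeroDivisors R]

theorem homogenize_dvd_homogenize_of_dvd {P Q : R[X]} {n : ℕ} (hQ : Q.natDegree ≤ n)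
    (h : P ∣ Q) : P.homogenize P.natDegree ∣ Q.homogenize n := by
  have hpad :
      Q.homogenize n = Q.homogenize Q.natDegree * MvPolynomial.X 1 ^ (n - Q.natDegree) := by
    simpa [Nat.add_sub_cancel' hQ] using
      homogenize_mul Q 1 le_rfl (natDegree_one.trans_le (Nat.zero_le (n - Q.natDegree)))
  rw [hpad]
  exact (homogenize_dvd h).mul_right _

theorem le_add_max_natDegree_of_forall_dvd_homogenize {G P Q : R[X]} {n m : ℕ} (hG : G ≠ 0)
    (hP : P ≠ 0) (hQ : Q ≠ 0) (hGP : (G * P).natDegree ≤ n) (hGQ : (G * Q).natDegree ≤ n)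
    (hdvd : ∀ h : MvPolynomial (Fin 2) R,
      h ∣ (G * P).homogenize n → h ∣ (G * Q).homogenize n → h.totalDegree ≤ m) :
    n ≤ m + max P.natDegree Q.natDegree := by
  set N := max P.natDegree Q.natDegree
  rw [natDegree_mul hG hP] at hGP
  rw [natDegree_mul hG hQ] at hGQ
  have hGN : G.natDegree + N ≤ n := by
    rcases max_choice P.natDegree Q.natDegree with h | h <;> rw [show N = _ from h] <;> assumption
  have hfactor : ∀ F : R[X], F.natDegree ≤ N → G.homogenize (n - N) ∣ (G * F).homogenize n :=
    fun F hF => by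
      rw [show n = n - N + N by omega, homogenize_mul _ _ (by omega) hF, Nat.add_sub_cancel]
      exact dvd_mul_right _ _
  have hdeg := hdvd _ (hfactor P (le_max_left _ _)) (hfactor Q (le_max_right _ _))
  rw [(isHomogeneous_homogenize G).totalDegree
    ((homogenize_eq_zero_iff (by omega)).not.2 hG)] at hdeg
  omega

end Homogenize

section ProjectiveLine

variable {k : Type*} [Field k]

def ofAffine (r : k) : Projectivization k (Fin 2 → k) :=
  Projectivization.mk k ![r, 1] (by simp [_root_.funext_iff, Fin.forall_fin_two])

theorem ofAffine_injective : Function.Injective (ofAffine (k := k)) := by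
  intro r s h
  obtain ⟨a, ha⟩ := (Projectivization.mk_eq_mk_iff' k _ _ _ _).1 h
  have h1 := congrFun ha 1
  have h0 := congrFun ha 0
  simp_all

theorem exists_rep_ofAffine (r : k) : ∃ a : k, a ≠ 0 ∧ (ofAffine r).rep = ![a * r, a] := by
  obtain ⟨a, ha⟩ := Projectivization.exists_smul_eq_mk_rep k ![r, 1] _
  refine ⟨a, a.ne_zero, ?_⟩
  rw [ofAffine, ← ha]
  ext i
  fin_cases i <;> simp [Units.smul_def]

theorem subsingleton_setOf_dotProduct_eq_zero {w : Fin 2 → k} (hw : w ≠ 0) :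
    {c : Projectivization k (Fin 2 → k) | c.rep ⬝ᵥ w = 0}.Subsingleton := by
  have hw' : ![-w 1, w 0] ≠ 0 := by
    simpa [_root_.funext_iff, Fin.forall_fin_two, and_comm] using hw
  suffices h : ∀ c : Projectivization k (Fin 2 → k), c.rep ⬝ᵥ w = 0 →
      c = Projectivization.mk k _ hw' from
    fun c hc d hd => (h c hc).trans (h d hd).symm
  intro c hc
  rw [← c.mk_rep, Projectivization.mk_eq_mk_iff']
  simp only [dotProduct, Fin.sum_univ_two] at hc
  rcases (show w 0 ≠ 0 ∨ w 1 ≠ 0 by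
      simpa [_root_.funext_iff, Fin.forall_fin_two, ← not_and_or] using hw) with h0 | h1
  · refine ⟨c.rep 1 / w 0, funext (Fin.forall_fin_two.2 ⟨?_, by simp [h0]⟩)⟩
    simp only [Pi.smul_apply, Matrix.cons_val_zero, smul_eq_mul]
    field_simp
    linear_combination -hc
  · refine ⟨-(c.rep 0 / w 1), funext (Fin.forall_fin_two.2 ⟨by simp [h1], ?_⟩)⟩
    simp only [Pi.smul_apply, Matrix.cons_val_one, Matrix.cons_val_zero, smul_eq_mul]
    field_simp
    linear_combination -hc

theorem finite_biUnion_setOf_dotProduct_eq_zero {V : Set (Fin 2 → k)} (hV : V.Finite)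
    (h0 : 0 ∉ V) :
    (⋃ w ∈ V, {c : Projectivization k (Fin 2 → k) | c.rep ⬝ᵥ w = 0}).Finite :=
  hV.biUnion fun _ hw =>
    (subsingleton_setOf_dotProduct_eq_zero (ne_of_mem_of_not_mem hw h0)).finite

theorem isSimpleZero_homogenize_ofAffine {F : k[X]} {n : ℕ} (hF : F.natDegree ≤ n) {r : k}
    (hr : rootMultiplicity r F = 1) : IsSimpleZero k (F.homogenize n) (ofAffine r) := by
  have hF0 : F ≠ 0 := by rintro rfl; simp at hr
  obtain ⟨a, ha, hrep⟩ := exists_rep_ofAffine r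
  have hL : MvPolynomial.C a * MvPolynomial.X 0 - MvPolynomial.C (a * r) * MvPolynomial.X 1 =
      MvPolynomial.C a * (Polynomial.X - Polynomial.C r).homogenize 1 := by
    rw [homogenize_sub, homogenize_X one_ne_zero, homogenize_C, map_mul, Nat.sub_self, pow_zero,
      pow_one]
    ring
  have hunit : ∀ m : ℕ, IsUnit (MvPolynomial.C (a ^ m) : MvPolynomial (Fin 2) k) :=
    fun m => (pow_ne_zero m ha).isUnit.map MvPolynomial.C
  simp only [IsSimpleZero, hrep, Matrix.cons_val_zero, Matrix.cons_val_one, hL]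
  refine ⟨?_, fun h2 => ?_⟩
  · rw [← pow_one a, (hunit 1).mul_left_dvd]
    simpa using homogenize_dvd_homogenize_of_dvd hF
      (dvd_iff_isRoot.2 ((rootMultiplicity_pos hF0).1 (by omega)))
  · rw [mul_pow, ← map_pow, (hunit 2).mul_left_dvd] at h2
    have := map_dvd (MvPolynomial.aeval ![Polynomial.X, (1 : k[X])]) h2
    rw [map_pow, aeval_homogenize_X_one _ (natDegree_X_sub_C r).le,
      aeval_homogenize_X_one _ hF] at this
    have := (le_rootMultiplicity_iff hF0).2 this
    omega

theorem eval_rep_ofAffine_homogenize_eq_zero_iff {F : k[X]} {n : ℕ} (hF : F.natDegree ≤ n)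
    (r : k) : MvPolynomial.eval (ofAffine r).rep (F.homogenize n) = 0 ↔ F.IsRoot r := by
  obtain ⟨a, ha, hrep⟩ := exists_rep_ofAffine r
  rw [eval_homogenize hF _ (by simpa [hrep] using ha), hrep]
  simp [ha, IsRoot]

end ProjectiveLine

theorem exists_isCoprime_eq_mul {R : Type*} [CommRing R] [IsDomain R] [IsPrincipalIdealRing R]
    [GCDMonoid R] {P : R} (hP : P ≠ 0) (Q : R) :
    ∃ G P₁ Q₁, G ≠ 0 ∧ IsCoprime P₁ Q₁ ∧ P = G * P₁ ∧ Q = G * Q₁ := by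
  obtain ⟨P₁, Q₁, hP₁, hQ₁, hunit⟩ := extract_gcd P Q
  exact ⟨gcd P Q, P₁, Q₁, gcd_ne_zero_of_left hP, (gcd_isUnit_iff _ _).1 hunit, hP₁, hQ₁⟩

section Pencil

variable {k : Type*} [Field k]

theorem natCast_ne_zero_of_ringChar {n d : ℕ} (hchar : ringChar k = 0 ∨ n < ringChar k)
    (hd : d ≠ 0) (hdn : d ≤ n) : (d : k) ≠ 0 := by
  rw [Ne, ringChar.spec]
  intro h
  rcases hchar with h0 | hn
  · exact hd (Nat.eq_zero_of_zero_dvd (h0 ▸ h))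
  · exact absurd (Nat.le_of_dvd (Nat.pos_of_ne_zero hd) h) (by omega)

theorem natDegree_eq_zero_of_derivative_eq_zero_of_ringChar {n : ℕ}
    (hchar : ringChar k = 0 ∨ n < ringChar k) {F : k[X]} (hF : F.natDegree ≤ n)
    (h : derivative F = 0) : F.natDegree = 0 := by
  by_contra hd
  have hsucc : F.natDegree - 1 + 1 = F.natDegree := Nat.sub_add_cancel (Nat.pos_of_ne_zero hd)
  have hlead := congrArg (Polynomial.coeff · (F.natDegree - 1)) h
  simp only [coeff_derivative, hsucc, Polynomial.coeff_zero] at hlead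
  rcases mul_eq_zero.1 hlead with h0 | h0
  · exact leadingCoeff_ne_zero.2 (fun hF0 => hd (by simp [hF0])) h0
  · exact natCast_ne_zero_of_ringChar hchar hd hF (by rw [← hsucc]; exact_mod_cast h0)

theorem wronskian_ne_zero_of_isCoprime {n : ℕ} (hchar : ringChar k = 0 ∨ n < ringChar k)
    {P Q : k[X]} (hcop : IsCoprime P Q) (hP : P.natDegree ≤ n) (hQ : Q.natDegree ≤ n)
    (hPQ : 0 < max P.natDegree Q.natDegree) : wronskian P Q ≠ 0 := by
  rw [Ne, hcop.wronskian_eq_zero_iff]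
  rintro ⟨hP', hQ'⟩
  have := natDegree_eq_zero_of_derivative_eq_zero_of_ringChar hchar hP hP'
  have := natDegree_eq_zero_of_derivative_eq_zero_of_ringChar hchar hQ hQ'
  omega

theorem eval_smul_add_smul (v : Fin 2 → k) (P Q : k[X]) (r : k) :
    (v 0 • P + v 1 • Q).eval r = v ⬝ᵥ ![P.eval r, Q.eval r] := by
  simp [dotProduct, Fin.sum_univ_two]

theorem coeff_smul_add_smul (v : Fin 2 → k) (P Q : k[X]) (n : ℕ) :
    (v 0 • P + v 1 • Q).coeff n = v ⬝ᵥ ![P.coeff n, Q.coeff n] := by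
  simp [dotProduct, Fin.sum_univ_two]

theorem natDegree_smul_add_smul_eq_max {P Q : k[X]} {v : Fin 2 → k}
    (h : v ⬝ᵥ ![P.coeff (max P.natDegree Q.natDegree), Q.coeff (max P.natDegree Q.natDegree)] ≠ 0) :
    (v 0 • P + v 1 • Q).natDegree = max P.natDegree Q.natDegree :=
  natDegree_eq_of_le_of_coeff_ne_zero
    (natDegree_add_le_of_degree_le ((natDegree_smul_le _ _).trans (le_max_left _ _))
      ((natDegree_smul_le _ _).trans (le_max_right _ _)))
    (by rwa [coeff_smul_add_smul])

theorem rootMultiplicity_smul_add_smul_le_one {P Q : k[X]} {v : Fin 2 → k} (hv : v ≠ 0) {r : k}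
    (hW : ¬(wronskian P Q).IsRoot r) : rootMultiplicity r (v 0 • P + v 1 • Q) ≤ 1 := by
  by_contra! h
  have hK : v 0 • P + v 1 • Q ≠ 0 := by rintro hK; simp [hK] at h
  obtain ⟨h0, h1⟩ := (one_lt_rootMultiplicity_iff_isRoot hK).1 h
  simp only [IsRoot, derivative_add, derivative_smul, Polynomial.eval_add, Polynomial.eval_smul,
    smul_eq_mul] at h0 h1
  have hW' : (wronskian P Q).eval r =
      P.eval r * (derivative Q).eval r - (derivative P).eval r * Q.eval r := by
    simp [wronskian]
  have hv0 : v 0 * (wronskian P Q).eval r = 0 := by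
    rw [hW']; linear_combination (derivative Q).eval r * h0 - Q.eval r * h1
  have hv1 : v 1 * (wronskian P Q).eval r = 0 := by
    rw [hW']; linear_combination P.eval r * h1 - (derivative P).eval r * h0
  apply hv
  ext i
  fin_cases i
  · exact (mul_eq_zero.1 hv0).resolve_right hW
  · exact (mul_eq_zero.1 hv1).resolve_right hW

theorem card_roots_toFinset_eq_natDegree [IsAlgClosed k] [DecidableEq k] {K : k[X]}
    (h : ∀ r, rootMultiplicity r K ≤ 1) : K.roots.toFinset.card = K.natDegree := by
  rw [Multiset.toFinset_card_of_nodup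
    (Multiset.nodup_iff_count_le_one.2 fun r => (count_roots K).trans_le (h r)),
    IsAlgClosed.card_roots_eq_natDegree]

theorem exists_forall_two_le_card_simple_roots_pencil [IsAlgClosed k] [DecidableEq k]
    {G P Q : k[X]} (hG : G ≠ 0) (hcop : IsCoprime P Q) (hW : wronskian P Q ≠ 0)
    (hN : 2 ≤ max P.natDegree Q.natDegree) :
    ∃ V : Set (Fin 2 → k), V.Finite ∧ 0 ∉ V ∧ ∀ v : Fin 2 → k, (∀ w ∈ V, v ⬝ᵥ w ≠ 0) →
      ∃ s : Finset k, 2 ≤ s.card ∧ ∀ r ∈ s,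
        rootMultiplicity r (v 0 • (G * P) + v 1 • (G * Q)) = 1 ∧
          ¬((G * P).IsRoot r ∧ (G * Q).IsRoot r) := by
  set N := max P.natDegree Q.natDegree
  have hcommon : ∀ r, ¬(P.IsRoot r ∧ Q.IsRoot r) := fun r =>
    not_and_or.2 (by simpa using aeval_ne_zero_of_isCoprime hcop r)
  have hlead : ¬(P.coeff N = 0 ∧ Q.coeff N = 0) := by
    rintro ⟨hP, hQ⟩
    rcases max_choice P.natDegree Q.natDegree with h | h
    · rw [show N = P.natDegree from h] at hP
      exact leadingCoeff_ne_zero.2 (ne_zero_of_natDegree_gt (n := 0) (by omega)) hP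
    · rw [show N = Q.natDegree from h] at hQ
      exact leadingCoeff_ne_zero.2 (ne_zero_of_natDegree_gt (n := 0) (by omega)) hQ
  refine ⟨insert ![P.coeff N, Q.coeff N]
      ((fun r => ![P.eval r, Q.eval r]) '' {r | (wronskian P Q * G).IsRoot r}),
    ((finite_setOfPred_isRoot (mul_ne_zero hW hG)).image _).insert _, ?_, fun v hv => ?_⟩
  · rintro (h | ⟨r, -, h⟩)
    · exact hlead (by simpa [_root_.funext_iff, Fin.forall_fin_two, eq_comm] using h)
    · exact hcommon r (by simpa [_root_.funext_iff, Fin.forall_fin_two, eq_comm] using h)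
  simp only [Set.forall_mem_insert, Set.forall_mem_image, Set.mem_ofPred_eq, root_mul] at hv
  set K := v 0 • P + v 1 • Q
  have hK : K.natDegree = N := natDegree_smul_add_smul_eq_max hv.1
  have hK0 : K ≠ 0 := by rintro hK0; rw [hK0, natDegree_zero] at hK; omega
  have hv0 : v ≠ 0 := by rintro rfl; simp at hv
  have hKroot : ∀ r, K.IsRoot r → ¬(wronskian P Q).IsRoot r ∧ ¬G.IsRoot r := fun r hr => by
    rw [← not_or]
    exact fun h => hv.2 h (by rwa [← eval_smul_add_smul])
  have hsimple : ∀ r, rootMultiplicity r K ≤ 1 := fun r => by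
    by_cases hr : K.IsRoot r
    · exact rootMultiplicity_smul_add_smul_le_one hv0 (hKroot r hr).1
    · simp [rootMultiplicity_eq_zero hr]
  refine ⟨K.roots.toFinset, by rw [card_roots_toFinset_eq_natDegree hsimple]; omega,
    fun r hr => ?_⟩
  have hr : K.IsRoot r := isRoot_of_mem_roots (Multiset.mem_toFinset.1 hr)
  have hGr : G.eval r ≠ 0 := (hKroot r hr).2
  refine ⟨?_, fun ⟨hPr, hQr⟩ => hcommon r ?_⟩
  · have hpencil : v 0 • (G * P) + v 1 • (G * Q) = G * K := by
      simp only [K, mul_add, mul_smul_comm]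
    rw [hpencil, rootMultiplicity_mul (mul_ne_zero hG hK0), rootMultiplicity_eq_zero hGr, zero_add]
    exact (hsimple r).antisymm ((rootMultiplicity_pos hK0).2 hr)
  · simp only [IsRoot, Polynomial.eval_mul, mul_eq_zero, hGr, false_or] at hPr hQr
    exact ⟨hPr, hQr⟩

end Pencil

/-- Let `k` be an algebraically closed field of characteristic `0` or
`> 5`, and let `p`, `q` be linearly independent binary quintic forms over `k` whose gcd
has degree at most 3 (i.e. every common divisor has degree at most 3). Then for all but
finitely many `[λ:μ] ∈ ℙ¹(k)`, the binary quintic `λp + μq` has at least two distinct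
simple zeros in `ℙ¹(k)`, none of which is a common zero of `p` and `q`. -/
theorem stmt11 (k : Type*) [Field k] [IsAlgClosed k]
    (hchar : ringChar k = 0 ∨ 5 < ringChar k)
    (p q : MvPolynomial (Fin 2) k)
    (hp : p.IsHomogeneous 5) (hq : q.IsHomogeneous 5)
    (hli : LinearIndependent k ![p, q])
    (hgcd : ∀ h : MvPolynomial (Fin 2) k, h ∣ p → h ∣ q → h.totalDegree ≤ 3) :
    ∃ B : Set (Projectivization k (Fin 2 → k)), B.Finite ∧
      ∀ c : Projectivization k (Fin 2 → k), c ∉ B →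
        ∃ t₁ t₂ : Projectivization k (Fin 2 → k), t₁ ≠ t₂ ∧
          IsSimpleZero k (c.rep 0 • p + c.rep 1 • q) t₁ ∧
          IsSimpleZero k (c.rep 0 • p + c.rep 1 • q) t₂ ∧
          ¬ (eval t₁.rep p = 0 ∧ eval t₁.rep q = 0) ∧
          ¬ (eval t₂.rep p = 0 ∧ eval t₂.rep q = 0) := by
  classical
  obtain ⟨P, hPn, rfl⟩ := hp.exists_homogenize_eq
  obtain ⟨Q, hQn, rfl⟩ := hq.exists_homogenize_eq
  have hP : P ≠ 0 := by rintro rfl; exact hli.ne_zero 0 (by simp)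
  have hQ : Q ≠ 0 := by rintro rfl; exact hli.ne_zero 1 (by simp)
  obtain ⟨G, P₁, Q₁, hG, hcop, rfl, rfl⟩ := exists_isCoprime_eq_mul hP Q
  have hP₁ := right_ne_zero_of_mul hP
  have hQ₁ := right_ne_zero_of_mul hQ
  have hN := le_add_max_natDegree_of_forall_dvd_homogenize hG hP₁ hQ₁ hPn hQn hgcd
  have hW := wronskian_ne_zero_of_isCoprime hchar hcop
    ((natDegree_le_of_dvd (dvd_mul_left _ _) hP).trans hPn)
    ((natDegree_le_of_dvd (dvd_mul_left _ _) hQ).trans hQn) (by omega)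
  obtain ⟨V, hVfin, hV0, hV⟩ :=
    exists_forall_two_le_card_simple_roots_pencil hG hcop hW (by omega)
  refine ⟨⋃ w ∈ V, {c | c.rep ⬝ᵥ w = 0}, finite_biUnion_setOf_dotProduct_eq_zero hVfin hV0,
    fun c hc => ?_⟩
  obtain ⟨s, hs, hsimple⟩ := hV c.rep (by simpa using hc)
  obtain ⟨r₁, hr₁, r₂, hr₂, hne⟩ := Finset.one_lt_card.1 hs
  have hpencil : (c.rep 0 • (G * P₁) + c.rep 1 • (G * Q₁)).natDegree ≤ 5 :=
    natDegree_add_le_of_degree_le ((natDegree_smul_le _ _).trans hPn)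
      ((natDegree_smul_le _ _).trans hQn)
  rw [← homogenize_smul, ← homogenize_smul, ← homogenize_add]
  refine ⟨ofAffine r₁, ofAffine r₂, ofAffine_injective.ne hne,
    isSimpleZero_homogenize_ofAffine hpencil (hsimple r₁ hr₁).1,
    isSimpleZero_homogenize_ofAffine hpencil (hsimple r₂ hr₂).1, ?_, ?_⟩ <;>
  simp only [eval_rep_ofAffine_homogenize_eq_zero_iff hPn,
    eval_rep_ofAffine_homogenize_eq_zero_iff hQn]
  exacts [(hsimple r₁ hr₁).2, (hsimple r₂ hr₂).2]
end
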